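/- arXiv:2605.14395 — 7 statements merged into one kernel-verified Lean document; each statement's English description precedes it below -/
import Mathlib

section
/- For any three unit vectors d1, d2, d3 in a complex inner product space with pairwise squared overlaps r12 = |⟨d1,d2⟩|², r23 = |⟨d2,d3⟩|², r13 = |⟨d1,d3⟩|², if r12 + r23 > 1 then r13 ≥ (√(r12·r23) − √((1−r12)(1−r23)))². -/
/-!
Split `d1` and `d3` into their components along `d2` and orthogonal to it. The inner product
`⟪d1, d3⟫` is then the product of the two overlaps with `d2` plus the inner product of the
orthogonal parts, whose norms are `√(1 - r12)` and `√(1 - r23)`. Cauchy–Schwarz on that remainder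
and the reverse triangle inequality give `|⟪d1, d3⟫| ≥ √(r12 r23) - √((1 - r12)(1 - r23))`, and
`r12 + r23 > 1` makes the right-hand side nonnegative, so the bound survives squaring.
-/

open scoped InnerProductSpace

section UnitVector

variable {𝕜 E : Type*} [RCLike 𝕜] [SeminormedAddCommGroup E] [InnerProductSpace 𝕜 E]
  {e : E}

theorem inner_eq_inner_mul_inner_add_inner_sub_proj (he : ‖e‖ = 1) (u v : E) :
    ⟪u, v⟫_𝕜 = ⟪u, e⟫_𝕜 * ⟪e, v⟫_𝕜 + ⟪u - ⟪e, u⟫_𝕜 • e, v - ⟪e, v⟫_𝕜 • e⟫_𝕜 := by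
  have hee : ⟪e, e⟫_𝕜 = 1 := by simp [inner_self_eq_norm_sq_to_K, he]
  simp only [inner_sub_left, inner_sub_right, inner_smul_left, inner_smul_right, hee,
    inner_conj_symm]
  ring

theorem norm_sub_proj_sq (he : ‖e‖ = 1) (u : E) :
    ‖u - ⟪e, u⟫_𝕜 • e‖ ^ 2 = ‖u‖ ^ 2 - ‖⟪e, u⟫_𝕜‖ ^ 2 := by
  have h := congrArg RCLike.re (inner_eq_inner_mul_inner_add_inner_sub_proj (𝕜 := 𝕜) he u u)
  rw [← inner_conj_symm u e, RCLike.conj_mul, map_add, inner_self_eq_norm_sq,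
    inner_self_eq_norm_sq] at h
  norm_cast at h
  linarith

theorem le_norm_inner_of_norm_eq_one (he : ‖e‖ = 1) (u v : E) :
    ‖⟪u, e⟫_𝕜‖ * ‖⟪e, v⟫_𝕜‖
        - √(‖u‖ ^ 2 - ‖⟪e, u⟫_𝕜‖ ^ 2) * √(‖v‖ ^ 2 - ‖⟪e, v⟫_𝕜‖ ^ 2) ≤ ‖⟪u, v⟫_𝕜‖ := by
  rw [← norm_sub_proj_sq he, ← norm_sub_proj_sq he, Real.sqrt_sq (norm_nonneg _),
    Real.sqrt_sq (norm_nonneg _), inner_eq_inner_mul_inner_add_inner_sub_proj he u v, ← norm_mul]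
  calc ‖⟪u, e⟫_𝕜 * ⟪e, v⟫_𝕜‖ - ‖u - ⟪e, u⟫_𝕜 • e‖ * ‖v - ⟪e, v⟫_𝕜 • e‖
      ≤ ‖⟪u, e⟫_𝕜 * ⟪e, v⟫_𝕜‖ - ‖⟪u - ⟪e, u⟫_𝕜 • e, v - ⟪e, v⟫_𝕜 • e⟫_𝕜‖ :=
        sub_le_sub_left (norm_inner_le_norm _ _) _
    _ ≤ _ := by
      simpa using norm_sub_norm_le (⟪u, e⟫_𝕜 * ⟪e, v⟫_𝕜) (-⟪u - ⟪e, u⟫_𝕜 • e, v - ⟪e, v⟫_𝕜 • e⟫_𝕜)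

end UnitVector

theorem overlap_gram_bound
    {H : Type*} [NormedAddCommGroup H] [InnerProductSpace ℂ H]
    (d1 d2 d3 : H) (h1 : ‖d1‖ = 1) (h2 : ‖d2‖ = 1) (h3 : ‖d3‖ = 1)
    (r12 r23 r13 : ℝ)
    (hr12 : r12 = ‖⟪d1, d2⟫_ℂ‖ ^ 2)
    (hr23 : r23 = ‖⟪d2, d3⟫_ℂ‖ ^ 2)
    (hr13 : r13 = ‖⟪d1, d3⟫_ℂ‖ ^ 2)
    (hgt : r12 + r23 > 1) :
    r13 ≥ (Real.sqrt (r12 * r23) - Real.sqrt ((1 - r12) * (1 - r23))) ^ 2 := by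
  have h21 : r12 = ‖⟪d2, d1⟫_ℂ‖ ^ 2 := by rw [hr12, ← inner_conj_symm, RCLike.norm_conj]
  have hle : r12 ≤ 1 := by
    simpa [hr12, h1, h2] using
      pow_le_pow_left₀ (norm_nonneg _) (norm_inner_le_norm (𝕜 := ℂ) d1 d2) 2
  have hgap : √((1 - r12) * (1 - r23)) ≤ √(r12 * r23) := Real.sqrt_le_sqrt (by nlinarith)
  have hbound := le_norm_inner_of_norm_eq_one (𝕜 := ℂ) h2 d1 d3
  rw [h1, h3, one_pow, ← h21, ← hr23, ← Real.sqrt_mul (sub_nonneg.2 hle),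
    ← Real.sqrt_sq (norm_nonneg ⟪d1, d2⟫_ℂ), ← Real.sqrt_sq (norm_nonneg ⟪d2, d3⟫_ℂ),
    ← Real.sqrt_mul (sq_nonneg _), ← hr12, ← hr23] at hbound
  rw [hr13, ge_iff_le]
  exact pow_le_pow_left₀ (sub_nonneg.2 hgap) hbound 2
end

section
/- For any three unit vectors d1, d2, d3 in ℂ², the quantity S = |⟨d1,d2⟩|² + |⟨d2,d3⟩|² − |⟨d1,d3⟩|² satisfies S ≤ 5/4. -/
/-!
Project `d₁` and `d₃` onto the orthogonal complement of `d₂`. The inner product of the projections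
is `⟪d₁, d₃⟫ - ⟪d₁, d₂⟫⟪d₂, d₃⟫` and their squared norms are `1 - a²` and `1 - b²`, where
`a = |⟪d₁, d₂⟫|`, `b = |⟪d₂, d₃⟫|`, `c = |⟪d₁, d₃⟫|`; Cauchy–Schwarz gives
`(ab - c)² ≤ (1 - a²)(1 - b²)`. Under this constraint `a² + b² - c² ≤ 5/4` is elementary
(writing `a = cos α`, `b = cos β`, the extremal case is `c = cos (α + β)`).
-/

open scoped InnerProductSpace

theorem sq_add_sq_sub_sq_le_five_div_four {a b c : ℝ} (ha : 0 ≤ a) (hb : 0 ≤ b)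
    (ha1 : a ≤ 1) (hb1 : b ≤ 1) (h : (a * b - c) ^ 2 ≤ (1 - a ^ 2) * (1 - b ^ 2)) :
    a ^ 2 + b ^ 2 - c ^ 2 ≤ 5 / 4 := by
  rcases le_or_gt (a * b) c with hc | hc
  · nlinarith [mul_nonneg ha hb, mul_nonneg (sub_nonneg.2 ha1) (sub_nonneg.2 hb1)]
  · set p := a * b - c
    -- `(1 - a²)(1 - b²) = (1 - ab)² - (a - b)²`
    have hp1 : p ≤ 1 - a * b := by
      refine abs_le_of_sq_le_sq' ?_ (by nlinarith) |>.2
      nlinarith [sq_nonneg (a - b)]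
    -- `a² + b² - c² ≤ 1 + 2pc ≤ 1 + (2p + c)² / 4`, and `0 ≤ 2p + c = ab + p ≤ 1`
    nlinarith [sq_nonneg (2 * p - c), mul_nonneg ha hb]

section InnerProductSpace

variable {𝕜 E : Type*} [RCLike 𝕜] [NormedAddCommGroup E] [InnerProductSpace 𝕜 E]

theorem norm_sub_inner_smul_sq {x y : E} (hy : ‖y‖ = 1) :
    ‖x - ⟪y, x⟫_𝕜 • y‖ ^ 2 = ‖x‖ ^ 2 - ‖⟪y, x⟫_𝕜‖ ^ 2 := by
  rw [@norm_sub_sq 𝕜, inner_smul_right, ← inner_conj_symm y x, RCLike.conj_mul, norm_smul, hy,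
    RCLike.norm_conj]
  norm_cast
  ring

theorem inner_sub_inner_smul {x y z : E} (hy : ‖y‖ = 1) :
    ⟪x - ⟪y, x⟫_𝕜 • y, z - ⟪y, z⟫_𝕜 • y⟫_𝕜 = ⟪x, z⟫_𝕜 - ⟪x, y⟫_𝕜 * ⟪y, z⟫_𝕜 := by
  have hyy : ⟪y, y⟫_𝕜 = 1 := by simp [inner_self_eq_norm_sq_to_K, hy]
  simp only [inner_sub_left, inner_sub_right, inner_smul_left, inner_smul_right, hyy,
    inner_conj_symm]
  ring

theorem norm_inner_sub_inner_mul_inner_sq_le {x y z : E} (hy : ‖y‖ = 1) :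
    ‖⟪x, z⟫_𝕜 - ⟪x, y⟫_𝕜 * ⟪y, z⟫_𝕜‖ ^ 2 ≤
      (‖x‖ ^ 2 - ‖⟪x, y⟫_𝕜‖ ^ 2) * (‖z‖ ^ 2 - ‖⟪y, z⟫_𝕜‖ ^ 2) := by
  rw [← inner_sub_inner_smul hy, norm_inner_symm x y, ← norm_sub_inner_smul_sq hy,
    ← norm_sub_inner_smul_sq hy, ← mul_pow]
  exact pow_le_pow_left₀ (norm_nonneg _) (norm_inner_le_norm _ _) 2

theorem norm_inner_le_one_of_norm_eq_one {x y : E} (hx : ‖x‖ = 1) (hy : ‖y‖ = 1) :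
    ‖⟪x, y⟫_𝕜‖ ≤ 1 := by
  simpa [hx, hy] using norm_inner_le_norm (𝕜 := 𝕜) x y

end InnerProductSpace

theorem three_qubit_overlap_bound
    (d1 d2 d3 : EuclideanSpace ℂ (Fin 2))
    (h1 : ‖d1‖ = 1) (h2 : ‖d2‖ = 1) (h3 : ‖d3‖ = 1) :
    ‖⟪d1, d2⟫_ℂ‖ ^ 2 + ‖⟪d2, d3⟫_ℂ‖ ^ 2 - ‖⟪d1, d3⟫_ℂ‖ ^ 2 ≤ 5 / 4 := by
  refine sq_add_sq_sub_sq_le_five_div_four (norm_nonneg _) (norm_nonneg _)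
    (norm_inner_le_one_of_norm_eq_one h1 h2) (norm_inner_le_one_of_norm_eq_one h2 h3) ?_
  calc (‖⟪d1, d2⟫_ℂ‖ * ‖⟪d2, d3⟫_ℂ‖ - ‖⟪d1, d3⟫_ℂ‖) ^ 2
      ≤ ‖⟪d1, d3⟫_ℂ - ⟪d1, d2⟫_ℂ * ⟪d2, d3⟫_ℂ‖ ^ 2 := by
        rw [← sq_abs, ← norm_mul, abs_sub_comm]
        exact pow_le_pow_left₀ (abs_nonneg _) (abs_norm_sub_norm_le _ _) 2
    _ ≤ (1 - ‖⟪d1, d2⟫_ℂ‖ ^ 2) * (1 - ‖⟪d2, d3⟫_ℂ‖ ^ 2) := by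
        simpa [h1, h3] using norm_inner_sub_inner_mul_inner_sq_le (x := d1) (z := d3) h2
end

section
/- For all real β, γ, we have cos²β + cos²γ − cos²(β+γ) ≤ 5/4, with equality when β = γ = π/6. -/
open Real

theorem cos_sq_cycle_bound :
    (∀ β γ : ℝ, cos β ^ 2 + cos γ ^ 2 - cos (β + γ) ^ 2 ≤ 5 / 4) ∧
      cos (π / 6) ^ 2 + cos (π / 6) ^ 2 - cos (π / 6 + π / 6) ^ 2 = 5 / 4 := by
  constructor
  · intro β γ
    rw [Real.cos_add]
    have h1 := Real.sin_sq_add_cos_sq β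
    have h2 := Real.sin_sq_add_cos_sq γ
    nlinarith [sq_nonneg (Real.cos β * Real.cos γ - 3 * Real.sin β * Real.sin γ),
      sq_nonneg (Real.sin β * Real.cos γ - Real.cos β * Real.sin γ)]
  · have : (π/6 : ℝ) + π/6 = π/3 := by ring
    rw [this, Real.cos_pi_div_six, Real.cos_pi_div_three]
    rw [div_pow, div_pow, Real.sq_sqrt (by norm_num : (3:ℝ) ≥ 0)]
    norm_num
end

section
/- For all integers n ≥ 3, n cos(π/n) − (n−1) cos(π/(n−1)) > 1. -/
open Real Set

/-! The derivative of `x ↦ x cos (π / x)` is `h (π / x)` with `h t = cos t + t sin t`. Since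
`h' t = t cos t > 0` on `(0, π / 2)` and `h 0 = 1`, this derivative exceeds `1` for `x > 2`, so
`x ↦ x cos (π / x) - x` is strictly increasing on `[2, ∞)`. -/

theorem strictMonoOn_cos_add_mul_sin :
    StrictMonoOn (fun t => cos t + t * sin t) (Icc 0 (π / 2)) := by
  refine strictMonoOn_of_deriv_pos (convex_Icc _ _) (by fun_prop) fun t ht => ?_
  rw [interior_Icc] at ht
  have hderiv : HasDerivAt (fun t => cos t + t * sin t) (t * cos t) t :=
    ((hasDerivAt_cos t).add ((hasDerivAt_id' t).mul (hasDerivAt_sin t))).congr_deriv (by ring)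
  rw [hderiv.deriv]
  exact mul_pos ht.1 (cos_pos_of_mem_Ioo ⟨by linarith [ht.1, pi_pos], ht.2⟩)

theorem one_lt_cos_add_mul_sin {t : ℝ} (ht0 : 0 < t) (ht : t ≤ π / 2) :
    1 < cos t + t * sin t := by
  simpa using strictMonoOn_cos_add_mul_sin ⟨le_rfl, by positivity⟩ ⟨ht0.le, ht⟩ ht0

theorem hasDerivAt_mul_cos_pi_div {x : ℝ} (hx : x ≠ 0) :
    HasDerivAt (fun y => y * cos (π / y)) (cos (π / x) + π / x * sin (π / x)) x := by
  have hinner : HasDerivAt (fun y => π / y) (-(π / x ^ 2)) x := by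
    simpa [div_eq_mul_inv] using (hasDerivAt_inv hx).const_mul π
  refine ((hasDerivAt_id' x).mul ((hasDerivAt_cos _).comp x hinner)).congr_deriv ?_
  simp only [Function.comp_apply]
  field_simp

theorem strictMonoOn_mul_cos_pi_div_sub_self :
    StrictMonoOn (fun x => x * cos (π / x) - x) (Ici 2) := by
  have hderiv : ∀ x : ℝ, 0 < x → HasDerivAt (fun x => x * cos (π / x) - x)
      (cos (π / x) + π / x * sin (π / x) - 1) x := fun x hx =>
    (hasDerivAt_mul_cos_pi_div hx.ne').sub (hasDerivAt_id' x)
  refine strictMonoOn_of_deriv_pos (convex_Ici 2)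
    (fun x hx => (hderiv x (by linarith [mem_Ici.mp hx])).continuousAt.continuousWithinAt)
    fun x hx => ?_
  rw [interior_Ici, mem_Ioi] at hx
  rw [(hderiv x (by linarith)).deriv, sub_pos]
  exact one_lt_cos_add_mul_sin (by positivity) (div_le_div_of_nonneg_left pi_pos.le two_pos hx.le)

theorem forward_difference_gt_one (n : ℕ) (hn : 3 ≤ n) :
    (n : ℝ) * cos (π / n) - ((n : ℝ) - 1) * cos (π / ((n : ℝ) - 1)) > 1 := by
  have hn' : (3 : ℝ) ≤ n := by exact_mod_cast hn
  have := strictMonoOn_mul_cos_pi_div_sub_self (a := (n : ℝ) - 1) (b := n)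
    (mem_Ici.mpr (by linarith)) (mem_Ici.mpr (by linarith)) (by linarith)
  linarith
end

section
/- Let n ≥ 3 and let v1, …, vn be unit vectors in ℝ³. Define r_{ij} = (1 + v_i·v_j)/2 and S_n = Σ_{i=1}^{n−1} r_{i,i+1} − r_{1n}. Then S_n ≤ n cos²(π/(2n)) − 1. -/
/-!
Let `θᵢ` be the angle between `vᵢ` and `vᵢ₊₁` and `φ` the angle between `v₁` and `vₙ`. Then
`2 Sₙ = n - 2 + ∑ cos θᵢ - cos φ`, and the triangle inequality for angles gives `φ ≤ ∑ θᵢ`.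
Adjoining the angle `π - φ` yields `n` angles in `[0, π]` with sum at least `π`; shrinking them
to sum exactly `π` only increases their cosines. At most one of them is then obtuse. If none is,
Jensen's inequality for `cos` on `[0, π/2]` bounds the sum of cosines by `n cos (π / n)`. If one
is, Jensen applied to the others, whose sum `σ` is at most `π/2`, bounds it by
`H(σ) = m cos (σ / m) - cos σ` with `m = n - 1`; `H` increases on `[0, m π / (m + 1)]`, where it
reaches `n cos (π / n)`. Finally `n cos² (π / 2n) = (n + n cos (π / n)) / 2`.
-/

open scoped RealInnerProductSpace
open Real Finset InnerProductGeometry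

lemma ConcaveOn.sum_le_card_mul_map_sum_div_card {ι : Type*} {D : Set ℝ} {f : ℝ → ℝ}
    (hf : ConcaveOn ℝ D f) {t : Finset ι} (ht : t.Nonempty) {x : ι → ℝ}
    (hx : ∀ i ∈ t, x i ∈ D) :
    ∑ i ∈ t, f (x i) ≤ #t * f ((∑ i ∈ t, x i) / #t) := by
  have hcard : (0 : ℝ) < #t := by exact_mod_cast ht.card_pos
  have h := hf.le_map_sum (t := t) (w := fun _ => (#t : ℝ)⁻¹) (p := x)
    (fun _ _ => by positivity) (by simp [hcard.ne']) hx
  simp only [smul_eq_mul, ← mul_sum] at h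
  rw [div_eq_inv_mul]
  calc ∑ i ∈ t, f (x i) = #t * ((#t : ℝ)⁻¹ * ∑ i ∈ t, f (x i)) := by field_simp
    _ ≤ #t * f ((#t : ℝ)⁻¹ * ∑ i ∈ t, x i) := by gcongr

lemma sum_cos_le_card_mul_cos_sum_div_card {ι : Type*} {t : Finset ι} (ht : t.Nonempty)
    {x : ι → ℝ} (hx0 : ∀ i ∈ t, 0 ≤ x i) (hx : ∀ i ∈ t, x i ≤ π / 2) :
    ∑ i ∈ t, cos (x i) ≤ #t * cos ((∑ i ∈ t, x i) / #t) :=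
  strictConcaveOn_cos_Icc.concaveOn.sum_le_card_mul_map_sum_div_card ht
    fun i hi => ⟨by linarith [hx0 i hi, pi_pos], hx i hi⟩

lemma monotoneOn_mul_cos_div_sub_cos {m : ℝ} (hm : 1 ≤ m) :
    MonotoneOn (fun t => m * cos (t / m) - cos t) (Set.Icc 0 (m * π / (m + 1))) := by
  have hm0 : 0 < m := by linarith
  refine monotoneOn_of_deriv_nonneg (convex_Icc _ _) (by fun_prop) (by fun_prop) fun t ht => ?_
  rw [interior_Icc, Set.mem_Ioo] at ht
  have hderiv : HasDerivAt (fun t => m * cos (t / m) - cos t) (sin t - sin (t / m)) t := by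
    refine ((((hasDerivAt_cos (t / m)).comp t ((hasDerivAt_id t).div_const m)).const_mul m).sub
      (hasDerivAt_cos t)).congr_deriv ?_
    field_simp
    ring
  rw [hderiv.deriv, sin_sub_sin]
  -- `(t + t / m) / 2 ≤ π / 2` is exactly the constraint `t ≤ m π / (m + 1)`
  have hmid : (t + t / m) / 2 ≤ π / 2 := by
    rw [lt_div_iff₀ (by linarith)] at ht
    have : t + t / m = t * (m + 1) / m := by field_simp
    rw [this, div_le_div_iff_of_pos_right two_pos, div_le_iff₀ hm0]
    linarith [ht.2]
  have hdiff : t / m ≤ t := div_le_self ht.1.le hm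
  have hquot : 0 ≤ t / m := div_nonneg ht.1.le hm0.le
  exact mul_nonneg
    (mul_nonneg two_pos.le (sin_nonneg_of_nonneg_of_le_pi (by linarith) (by linarith)))
    (cos_nonneg_of_neg_pi_div_two_le_of_le (by linarith [pi_pos]) hmid)

lemma mul_cos_div_sub_cos_le {m t : ℝ} (hm : 1 ≤ m) (ht0 : 0 ≤ t) (ht : t ≤ m * π / (m + 1)) :
    m * cos (t / m) - cos t ≤ (m + 1) * cos (π / (m + 1)) := by
  have hpeak : 0 ≤ m * π / (m + 1) := by have := pi_pos; positivity
  have hmono := monotoneOn_mul_cos_div_sub_cos hm ⟨ht0, ht⟩ ⟨hpeak, le_rfl⟩ ht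
  have hquot : m * π / (m + 1) / m = π / (m + 1) := by field_simp
  have hsupp : m * π / (m + 1) = π - π / (m + 1) := by field_simp; ring
  simp only [hquot] at hmono
  rw [hsupp, cos_pi_sub] at hmono
  linarith

variable {ι : Type*} {s : Finset ι} {x : ι → ℝ}

theorem sum_cos_le_of_sum_eq_pi (hs : 2 ≤ #s) (hx0 : ∀ i ∈ s, 0 ≤ x i)
    (hsum : ∑ i ∈ s, x i = π) :
    ∑ i ∈ s, cos (x i) ≤ #s * cos (π / #s) := by
  classical
  have hle_sum : ∀ t ⊆ s, ∀ i ∈ t, x i ≤ ∑ j ∈ t, x j := fun t ht i hi =>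
    single_le_sum (fun j hj => hx0 j (ht hj)) hi
  by_cases hobtuse : ∃ j ∈ s, π / 2 < x j
  · obtain ⟨j, hj, hxj⟩ := hobtuse
    set t := s.erase j
    set σ := ∑ i ∈ t, x i
    have hts : t ⊆ s := erase_subset j s
    have hcard : (#s : ℝ) = #t + 1 := by exact_mod_cast (card_erase_add_one hj).symm
    have hxj_eq : x j = π - σ := by linarith [sum_erase_add s x hj]
    have hσ : σ ≤ π / 2 := by linarith
    have hm : 1 ≤ #t := by rw [← Nat.add_le_add_iff_right, card_erase_add_one hj]; exact hs
    have hjensen := sum_cos_le_card_mul_cos_sum_div_card (card_pos.1 hm)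
      (fun i hi => hx0 i (hts hi)) (fun i hi => (hle_sum t hts i hi).trans hσ)
    have hmR : (1 : ℝ) ≤ #t := by exact_mod_cast hm
    have hσ_peak : σ ≤ #t * π / (#t + 1) := by
      rw [le_div_iff₀ (by linarith)]
      nlinarith [pi_pos]
    calc ∑ i ∈ s, cos (x i) = ∑ i ∈ t, cos (x i) + cos (x j) := (sum_erase_add s _ hj).symm
      _ ≤ #t * cos (σ / #t) - cos σ := by rw [hxj_eq, cos_pi_sub]; linarith
      _ ≤ (#t + 1) * cos (π / (#t + 1)) :=
        mul_cos_div_sub_cos_le hmR (sum_nonneg fun i hi => hx0 i (hts hi)) hσ_peak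
      _ = #s * cos (π / #s) := by rw [hcard]
  · push Not at hobtuse
    simpa [hsum] using sum_cos_le_card_mul_cos_sum_div_card
      (by rw [← card_pos]; omega) hx0 hobtuse

theorem sum_cos_le_of_pi_le_sum (hs : 2 ≤ #s) (hx0 : ∀ i ∈ s, 0 ≤ x i)
    (hxπ : ∀ i ∈ s, x i ≤ π) (hsum : π ≤ ∑ i ∈ s, x i) :
    ∑ i ∈ s, cos (x i) ≤ #s * cos (π / #s) := by
  set c := π / ∑ i ∈ s, x i
  have hS : 0 < ∑ i ∈ s, x i := lt_of_lt_of_le pi_pos hsum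
  have hc0 : 0 ≤ c := by positivity
  have hc1 : c ≤ 1 := div_le_one_of_le₀ hsum hS.le
  calc ∑ i ∈ s, cos (x i) ≤ ∑ i ∈ s, cos (c * x i) := sum_le_sum fun i hi =>
        cos_le_cos_of_nonneg_of_le_pi (mul_nonneg hc0 (hx0 i hi)) (hxπ i hi)
          (mul_le_of_le_one_left (hx0 i hi) hc1)
    _ ≤ #s * cos (π / #s) := sum_cos_le_of_sum_eq_pi hs (fun i hi => mul_nonneg hc0 (hx0 i hi))
          (by rw [← mul_sum]; exact div_mul_cancel₀ _ hS.ne')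

theorem sum_cos_sub_cos_le {θ : ι → ℝ} {φ : ℝ} (hs : 1 ≤ #s) (hθ0 : ∀ i ∈ s, 0 ≤ θ i)
    (hθπ : ∀ i ∈ s, θ i ≤ π) (hφ0 : 0 ≤ φ) (hφπ : φ ≤ π) (hφ : φ ≤ ∑ i ∈ s, θ i) :
    ∑ i ∈ s, cos (θ i) - cos φ ≤ (#s + 1) * cos (π / (#s + 1)) := by
  have key := sum_cos_le_of_pi_le_sum (s := s.insertNone) (x := fun o => o.elim (π - φ) θ)
    (by rw [card_insertNone]; omega)
    (by rintro (_ | i) hi; exacts [sub_nonneg.2 hφπ, hθ0 i (some_mem_insertNone.1 hi)])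
    (by rintro (_ | i) hi; exacts [sub_le_self π hφ0, hθπ i (some_mem_insertNone.1 hi)])
    (by rw [sum_insertNone]; simp only [Option.elim]; linarith)
  rw [sum_insertNone, card_insertNone] at key
  simp only [Option.elim, cos_pi_sub] at key
  push_cast at key
  linarith

lemma angle_le_sum_angle_succ {E : Type*} [NormedAddCommGroup E] [InnerProductSpace ℝ E]
    (u : ℕ → E) {a b : ℕ} (ha : u a ≠ 0) (hab : a ≤ b) :
    angle (u a) (u b) ≤ ∑ i ∈ Ico a b, angle (u i) (u (i + 1)) := by
  induction b, hab using Nat.le_induction with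
  | base => simp [angle_self ha]
  | succ b hab ih =>
    rw [sum_Ico_succ_top hab]
    linarith [angle_le_angle_add_angle (u a) (u b) (u (b + 1))]

theorem bloch_cycle_bound
    (n : ℕ) (hn : 3 ≤ n) (v : ℕ → EuclideanSpace ℝ (Fin 3))
    (hv : ∀ i, 1 ≤ i → i ≤ n → ‖v i‖ = 1) :
    (∑ i ∈ Finset.Icc 1 (n - 1), (1 + ⟪v i, v (i + 1)⟫) / 2) - (1 + ⟪v 1, v n⟫) / 2 ≤
      n * cos (π / (2 * n)) ^ 2 - 1 := by
  set θ : ℕ → ℝ := fun i => angle (v i) (v (i + 1))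
  have hinner : ∀ i j, 1 ≤ i → i ≤ n → 1 ≤ j → j ≤ n → ⟪v i, v j⟫ = cos (angle (v i) (v j)) := by
    intro i j hi hi' hj hj'
    rw [cos_angle, hv i hi hi', hv j hj hj', mul_one, div_one]
  have hsum : ∑ i ∈ Icc 1 (n - 1), (1 + ⟪v i, v (i + 1)⟫) / 2 =
      (#(Icc 1 (n - 1)) + ∑ i ∈ Icc 1 (n - 1), cos (θ i)) / 2 := by
    rw [← sum_div, sum_add_distrib, sum_const, nsmul_one]
    congr 2
    exact sum_congr rfl fun i hi => by
      rw [mem_Icc] at hi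
      exact hinner i (i + 1) hi.1 (by omega) (by omega) (by omega)
  have hchain : angle (v 1) (v n) ≤ ∑ i ∈ Icc 1 (n - 1), θ i := by
    have hIcc : Icc 1 (n - 1) = Ico 1 n := by ext; simp only [mem_Icc, mem_Ico]; omega
    have hv1 : v 1 ≠ 0 := norm_ne_zero_iff.1 (by simp [hv 1 le_rfl (by omega)])
    rw [hIcc]
    exact angle_le_sum_angle_succ v hv1 (by omega)
  have hcycle := sum_cos_sub_cos_le (s := Icc 1 (n - 1)) (by simp only [Nat.card_Icc]; omega)
    (fun i _ => angle_nonneg _ _) (fun i _ => angle_le_pi _ _) (angle_nonneg _ _)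
    (angle_le_pi _ _) hchain
  have hcard : (#(Icc 1 (n - 1)) : ℝ) + 1 = n := by
    have : #(Icc 1 (n - 1)) + 1 = n := by simp only [Nat.card_Icc]; omega
    exact_mod_cast this
  have hhalf : 2 * (π / (2 * n)) = π / n := by field_simp
  rw [hcard] at hcycle
  rw [hsum, hinner 1 n le_rfl (by omega) (by omega) le_rfl, cos_sq, hhalf]
  linarith
end

section
/- Let n ≥ 3 and let d1, …, dn be unit vectors in ℂ². Then Σ_{i=1}^{n−1} |⟨d_i, d_{i+1}⟩|² − |⟨d_1, d_n⟩|² ≤ n cos²(π/(2n)) − 1. -/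
/-!
The Bloch map `ℂ² → ℝ³` sends unit vectors to unit vectors with
`|⟨u, v⟩|² = (1 + cos θ) / 2`, `θ` the angle between the images. By the triangle inequality for
angles, the angles `θᵢ` between consecutive Bloch vectors together with `π - ψ`, where `ψ` is the
angle between the first and the last one, are `n` numbers in `[0, π]` with sum at least `π`.
Scaling them down to sum exactly `π` only increases their cosines; averaging the largest one with
another one then puts all of them in `[0, π / 2]`, where Jensen's inequality for the concave
cosine gives `∑ cos ≤ n cos (π / n) = n (2 cos² (π / 2n) - 1)`.
-/
open scoped InnerProductSpace
open Real Finset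

namespace Real

lemma cos_add_cos_le_two_mul_cos_half {a b : ℝ} (h₀ : 0 ≤ a + b) (hπ : a + b ≤ π) :
    cos a + cos b ≤ 2 * cos ((a + b) / 2) := by
  have hc : 0 ≤ cos ((a + b) / 2) :=
    cos_nonneg_of_mem_Icc ⟨by linarith [pi_pos], by linarith⟩
  rw [cos_add_cos]
  nlinarith [cos_le_one ((a - b) / 2)]

variable {ι : Type*}

lemma sum_cos_le_card_mul_cos_avg {s : Finset ι} (hs : s.Nonempty) {x : ι → ℝ}
    (hx : ∀ i ∈ s, x i ∈ Set.Icc (-(π / 2)) (π / 2)) :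
    ∑ i ∈ s, cos (x i) ≤ #s * cos ((∑ i ∈ s, x i) / #s) := by
  have hcard : (0 : ℝ) < #s := by exact_mod_cast hs.card_pos
  have := strictConcaveOn_cos_Icc.concaveOn.le_map_sum (t := s) (w := fun _ => (#s : ℝ)⁻¹)
    (fun _ _ => by positivity) (by simp [hcard.ne']) hx
  simp only [smul_eq_mul, inv_mul_eq_div] at this
  rwa [← sum_div, ← sum_div, div_le_iff₀ hcard, mul_comm] at this

lemma sum_cos_le_of_sum_eq_pi {s : Finset ι} (hs : 2 ≤ #s) {x : ι → ℝ}
    (hx : ∀ i ∈ s, 0 ≤ x i) (hsum : ∑ i ∈ s, x i = π) :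
    ∑ i ∈ s, cos (x i) ≤ #s * cos (π / #s) := by
  classical
  obtain ⟨j, hj, hmax⟩ := s.exists_max_image x (card_pos.mp (by omega))
  obtain ⟨k, hk, hkj⟩ := exists_mem_ne (by omega : 1 < #s) j
  have hpair : ∀ {a b}, a ∈ s → b ∈ s → a ≠ b → x a + x b ≤ π :=
    fun ha hb hab => hsum ▸ add_le_sum hx ha hb hab
  set z : ι → ℝ := fun i => if i = j ∨ i = k then (x j + x k) / 2 else x i
  have hz_off : ∀ i ∈ s, i ≠ j ∧ i ≠ k → z i = x i := fun i _ hi => by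
    simp [z, hi.1, hi.2]
  have hz_sum : ∑ i ∈ s, z i = π := by
    rw [← hsum, ← sub_eq_zero, ← sum_sub_distrib,
      sum_eq_add_of_mem j k hj hk hkj.symm (fun i hi hne => by rw [hz_off i hi hne, sub_self])]
    simp only [true_or, or_true, ↓reduceIte, z]
    ring
  have hz_cos : ∑ i ∈ s, cos (x i) ≤ ∑ i ∈ s, cos (z i) := by
    rw [← sub_nonneg, ← sum_sub_distrib,
      sum_eq_add_of_mem j k hj hk hkj.symm (fun i hi hne => by rw [hz_off i hi hne, sub_self])]
    simp only [z, true_or, or_true, if_true]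
    linarith [cos_add_cos_le_two_mul_cos_half (add_nonneg (hx j hj) (hx k hk))
      (hpair hj hk hkj.symm)]
  have hz_mem : ∀ i ∈ s, z i ∈ Set.Icc (-(π / 2)) (π / 2) := by
    intro i hi
    by_cases hjk : i = j ∨ i = k
    · simp only [z, hjk, if_true]
      constructor <;> linarith [hx j hj, hx k hk, hpair hj hk hkj.symm, pi_pos]
    · rw [hz_off i hi (not_or.mp hjk)]
      constructor <;> linarith [hx i hi, hmax i hi, hpair hi hj (not_or.mp hjk).1, pi_pos]
  calc ∑ i ∈ s, cos (x i) ≤ ∑ i ∈ s, cos (z i) := hz_cos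
    _ ≤ #s * cos (π / #s) := hz_sum ▸ sum_cos_le_card_mul_cos_avg (card_pos.mp (by omega)) hz_mem

lemma sum_cos_le_of_pi_le_sum {s : Finset ι} (hs : 2 ≤ #s) {x : ι → ℝ}
    (hx : ∀ i ∈ s, x i ∈ Set.Icc 0 π) (hsum : π ≤ ∑ i ∈ s, x i) :
    ∑ i ∈ s, cos (x i) ≤ #s * cos (π / #s) := by
  set S := ∑ i ∈ s, x i
  have hS : 0 < S := pi_pos.trans_le hsum
  have hscale : π / S ≤ 1 := (div_le_one hS).mpr hsum
  calc ∑ i ∈ s, cos (x i) ≤ ∑ i ∈ s, cos (π / S * x i) := by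
        refine sum_le_sum fun i hi => cos_le_cos_of_nonneg_of_le_pi
          (by have := (hx i hi).1; positivity) (hx i hi).2 ?_
        nlinarith [(hx i hi).1]
    _ ≤ #s * cos (π / #s) := by
        refine sum_cos_le_of_sum_eq_pi hs (fun i hi => by have := (hx i hi).1; positivity) ?_
        rw [← mul_sum, div_mul_cancel₀ _ hS.ne']

lemma sum_cos_sub_cos_le {s : Finset ι} (hs : 1 ≤ #s) {x : ι → ℝ} {ψ : ℝ}
    (hx : ∀ i ∈ s, x i ∈ Set.Icc 0 π) (hψ : ψ ∈ Set.Icc 0 π) (hψx : ψ ≤ ∑ i ∈ s, x i) :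
    ∑ i ∈ s, cos (x i) - cos ψ ≤ (#s + 1) * cos (π / (#s + 1)) := by
  have := sum_cos_le_of_pi_le_sum (s := insertNone s) (x := fun i => i.elim (π - ψ) x)
    (by rw [card_insertNone]; omega)
    (by
      rintro (_ | i) hi
      · exact ⟨sub_nonneg.mpr hψ.2, sub_le_self π hψ.1⟩
      · exact hx i (by simpa using hi))
    (by rw [sum_insertNone]; simp only [Option.elim]; linarith)
  rw [sum_insertNone, card_insertNone] at this
  simp only [Option.elim, cos_pi_sub] at this
  push_cast at this
  linarith

end Real

namespace InnerProductGeometry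

variable {V : Type*} [NormedAddCommGroup V] [InnerProductSpace ℝ V]

lemma angle_le_sum_angle (v : ℕ → V) {a b : ℕ} (hab : a < b) :
    angle (v a) (v b) ≤ ∑ i ∈ Ico a b, angle (v i) (v (i + 1)) := by
  induction b, hab using Nat.le_induction with
  | base => simp
  | succ b hab ih =>
    rw [sum_Ico_succ_top (by omega)]
    linarith [angle_le_angle_add_angle (v a) (v b) (v (b + 1))]

lemma sum_cos_angle_sub_cos_angle_le (v : ℕ → V) {a b : ℕ} (hab : a < b) :
    ∑ i ∈ Ico a b, cos (angle (v i) (v (i + 1))) - cos (angle (v a) (v b)) ≤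
      ((b - a : ℕ) + 1) * cos (π / ((b - a : ℕ) + 1)) := by
  have := sum_cos_sub_cos_le (s := Ico a b) (by rw [Nat.card_Ico]; omega)
    (fun i _ => ⟨angle_nonneg _ _, angle_le_pi _ _⟩) ⟨angle_nonneg _ _, angle_le_pi _ _⟩
    (angle_le_sum_angle v hab)
  rwa [Nat.card_Ico] at this

end InnerProductGeometry

open InnerProductGeometry

noncomputable def blochVector (u : EuclideanSpace ℂ (Fin 2)) : EuclideanSpace ℝ (Fin 3) :=
  !₂[2 * (starRingEnd ℂ (u 0) * u 1).re, 2 * (starRingEnd ℂ (u 0) * u 1).im, ‖u 0‖ ^ 2 - ‖u 1‖ ^ 2]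

lemma inner_blochVector (u v : EuclideanSpace ℂ (Fin 2)) :
    ⟪blochVector u, blochVector v⟫_ℝ = 2 * ‖⟪u, v⟫_ℂ‖ ^ 2 - ‖u‖ ^ 2 * ‖v‖ ^ 2 := by
  simp only [blochVector, EuclideanSpace.norm_sq_eq, PiLp.inner_apply, Fin.sum_univ_two,
    Fin.sum_univ_three, RCLike.inner_apply, conj_trivial]
  simp only [Complex.mul_re, Complex.mul_im, Complex.add_re, Complex.add_im, Complex.conj_re,
    Complex.conj_im, Complex.sq_norm, Complex.normSq_apply, Matrix.cons_val_zero,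
    Matrix.cons_val_one, Matrix.cons_val]
  ring

lemma norm_blochVector (u : EuclideanSpace ℂ (Fin 2)) : ‖blochVector u‖ = ‖u‖ ^ 2 := by
  have h : ‖blochVector u‖ ^ 2 = (‖u‖ ^ 2) ^ 2 := by
    rw [← real_inner_self_eq_norm_sq, inner_blochVector, inner_self_eq_norm_sq_to_K]
    norm_cast
    rw [abs_of_nonneg (by positivity)]
    ring
  exact (pow_left_inj₀ (norm_nonneg _) (by positivity) two_ne_zero).mp h

lemma sq_norm_inner_eq_cos_angle_blochVector {u v : EuclideanSpace ℂ (Fin 2)}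
    (hu : ‖u‖ = 1) (hv : ‖v‖ = 1) :
    ‖⟪u, v⟫_ℂ‖ ^ 2 = (1 + cos (angle (blochVector u) (blochVector v))) / 2 := by
  rw [cos_angle, inner_blochVector, norm_blochVector, norm_blochVector, hu, hv]
  ring

theorem qubit_cycle_bound
    (n : ℕ) (hn : 3 ≤ n) (d : ℕ → EuclideanSpace ℂ (Fin 2))
    (hd : ∀ i, 1 ≤ i → i ≤ n → ‖d i‖ = 1) :
    (∑ i ∈ Finset.Icc 1 (n - 1), ‖⟪d i, d (i + 1)⟫_ℂ‖ ^ 2) - ‖⟪d 1, d n⟫_ℂ‖ ^ 2 ≤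
      n * cos (π / (2 * n)) ^ 2 - 1 := by
  set v := fun i => blochVector (d i)
  have hIcc : Icc 1 (n - 1) = Ico 1 n := by ext i; simp only [mem_Icc, mem_Ico]; omega
  have hsum : ∑ i ∈ Icc 1 (n - 1), ‖⟪d i, d (i + 1)⟫_ℂ‖ ^ 2 =
      ∑ i ∈ Ico 1 n, (1 + cos (angle (v i) (v (i + 1)))) / 2 := by
    rw [hIcc]
    refine sum_congr rfl fun i hi => ?_
    obtain ⟨hi₁, hi₂⟩ := mem_Ico.mp hi
    exact sq_norm_inner_eq_cos_angle_blochVector (hd i hi₁ hi₂.le) (hd (i + 1) (by omega) hi₂)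
  have hcycle := sum_cos_angle_sub_cos_angle_le v (by omega : 1 < n)
  have hcast : ((n - 1 : ℕ) : ℝ) + 1 = n := by norm_cast; omega
  have hcos : cos (π / n) = 2 * cos (π / (2 * n)) ^ 2 - 1 := by
    rw [← cos_two_mul]; congr 1; field_simp
  rw [hsum, sq_norm_inner_eq_cos_angle_blochVector (hd 1 le_rfl (by omega)) (hd n (by omega) le_rfl),
    ← sum_div, sum_add_distrib, sum_const, Nat.card_Ico, nsmul_one]
  rw [hcast, hcos] at hcycle
  push_cast [Nat.cast_sub (by omega : 1 ≤ n)] at hcycle ⊢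
  linarith
end

section
/- The bound S_n ≤ n cos²(π/(2n)) − 1 is achieved: take n unit vectors v_k in ℝ³ lying in a common plane through the origin with v_k = (cos((k−1)π/n), sin((k−1)π/n), 0); then with r_{ij} = (1 + v_i·v_j)/2, one has Σ_{i=1}^{n−1} r_{i,i+1} − r_{1n} = n cos²(π/(2n)) − 1. -/
open scoped RealInnerProductSpace
open Real Finset

/-! Consecutive vectors meet at angle π/n and the first and last at angle π - π/n, so the
`n - 1` consecutive terms each equal `(1 + cos (π/n))/2 = cos² (π/(2n))` and the closing term
equals `1 - cos² (π/(2n))`. -/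

theorem EuclideanSpace.inner_eq_cos_sub_of_planar {x y : EuclideanSpace ℝ (Fin 3)} {a b : ℝ}
    (hx : x.ofLp = ![cos a, sin a, 0]) (hy : y.ofLp = ![cos b, sin b, 0]) :
    ⟪x, y⟫ = cos (a - b) := by
  simp only [PiLp.inner_apply, Fin.sum_univ_three, RCLike.inner_apply, conj_trivial, hx, hy,
    Matrix.cons_val_zero, Matrix.cons_val_one, Matrix.cons_val_two, Matrix.head_cons,
    Matrix.tail_cons, mul_zero, add_zero, cos_sub]
  ring

theorem sum_cycle_eq_of_inner_succ_eq {E : Type*} [NormedAddCommGroup E] [InnerProductSpace ℝ E]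
    {n : ℕ} (hn : 1 ≤ n) {v : ℕ → E} {c : ℝ} (hsucc : ∀ i, ⟪v i, v (i + 1)⟫ = c)
    (hlast : ⟪v 1, v n⟫ = -c) :
    (∑ i ∈ Icc 1 (n - 1), (1 + ⟪v i, v (i + 1)⟫) / 2) - (1 + ⟪v 1, v n⟫) / 2 =
      n * ((1 + c) / 2) - 1 := by
  simp only [hsucc, hlast, sum_const, Nat.card_Icc, nsmul_eq_mul, Nat.add_sub_cancel,
    Nat.cast_sub hn, Nat.cast_one]
  ring

theorem bloch_cycle_bound_achieved
    (n : ℕ) (hn : 3 ≤ n) (v : ℕ → EuclideanSpace ℝ (Fin 3))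
    (hv : ∀ k, v k = ![cos (((k : ℝ) - 1) * π / n), sin (((k : ℝ) - 1) * π / n), 0]) :
    (∑ i ∈ Finset.Icc 1 (n - 1), (1 + ⟪v i, v (i + 1)⟫) / 2) - (1 + ⟪v 1, v n⟫) / 2 =
      n * cos (π / (2 * n)) ^ 2 - 1 := by
  have hn0 : (n : ℝ) ≠ 0 := by positivity
  have hinner (i j : ℕ) : ⟪v i, v j⟫ = cos ((i - 1) * π / n - (j - 1) * π / n) :=
    EuclideanSpace.inner_eq_cos_sub_of_planar (hv i) (hv j)
  have hsucc (i : ℕ) : ⟪v i, v (i + 1)⟫ = cos (π / n) := by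
    rw [hinner, ← cos_neg]
    push_cast
    ring_nf
  have hlast : ⟪v 1, v n⟫ = -cos (π / n) := by
    rw [hinner, ← cos_pi_sub, ← cos_neg]
    congr 1
    field_simp
    push_cast
    ring
  have hhalf : cos (π / (2 * n)) ^ 2 = (1 + cos (π / n)) / 2 := by
    rw [cos_sq, show 2 * (π / (2 * n)) = π / n by ring]
    ring
  rw [sum_cycle_eq_of_inner_succ_eq (by omega) hsucc hlast, hhalf]
end
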